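/- Language of the replay strategy. Let Cap be a type with decidable equality and let π : List (Finset Cap) be a capability history of length n. Consider the DFA over the alphabet Finset Cap with state type Option (Fin (n+1)) (none a rejecting sink), start state some 0, accepting states all states of the form some i, and transition function: at state some i with i < n, reading the (i+1)-th entry of π leads to some (i+1) and reading any other letter leads to none; at state some n, reading the empty set ∅ loops to some n and reading any other letter leads to none; at none every letter stays at none. Then for every word w : List (Finset Cap), the DFA accepts w if and only if w is a prefix of π, or w = π ++ List.replicate m ∅ for some natural number m. -/

import Mathlib

/-- Transition function of the replay-strategy DFA for a history `π`.
States `some i` for `i : Fin (π.length + 1)` track progress through `π`; `none` is a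
rejecting sink. -/
def replayStep {Cap : Type*} [DecidableEq Cap] (π : List (Finset Cap)) :
    Option (Fin (π.length + 1)) → Finset Cap → Option (Fin (π.length + 1))
  | none, _ => none
  | some i, a =>
    if h : (i : ℕ) < π.length then
      -- at state `some i` with `i < n`: reading the (i+1)-th entry of π advances
      if a = π.get ⟨i, h⟩ then some ⟨(i : ℕ) + 1, by omega⟩ else none
    else
      -- at state `some n`: only the empty set loops
      if a = ∅ then some i else none

/-- The replay-strategy DFA for a history `π`. -/
def replayDFA {Cap : Type*} [DecidableEq Cap] (π : List (Finset Cap)) :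
    DFA (Finset Cap) (Option (Fin (π.length + 1))) where
  step := replayStep π
  start := some ⟨0, by omega⟩
  accept := Set.range some

/-! The state `some i` of `replayDFA π` accepts exactly the prefixes of `π.drop i` and the
words `π.drop i ++ ∅ ∅ … ∅`; one letter at a time, both sides of this claim peel off the
same head, so it follows by induction on the word, generalizing the state. -/

namespace List

variable {α : Type*}

theorem exists_cons_eq_replicate_iff {a b : α} {l : List α} :
    (∃ m, a :: l = replicate m b) ↔ a = b ∧ ∃ m, l = replicate m b := by
  constructor
  · rintro ⟨_ | m, h⟩
    · exact absurd h (cons_ne_nil a l)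
    · exact ⟨(cons_eq_cons.mp h).1, m, (cons_eq_cons.mp h).2⟩
  · rintro ⟨rfl, m, rfl⟩
    exact ⟨m + 1, rfl⟩

theorem cons_prefix_or_eq_append_replicate_cons_iff {a c b : α} {w l : List α} :
    (a :: w <+: c :: l ∨ ∃ m, a :: w = c :: l ++ replicate m b) ↔
      a = c ∧ (w <+: l ∨ ∃ m, w = l ++ replicate m b) := by
  simp only [cons_prefix_cons, cons_append, cons_eq_cons, and_or_left, exists_and_left]

theorem cons_prefix_or_eq_append_replicate_nil_iff {a b : α} {w : List α} :
    (a :: w <+: [] ∨ ∃ m, a :: w = [] ++ replicate m b) ↔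
      a = b ∧ (w <+: [] ∨ ∃ m, w = [] ++ replicate m b) := by
  simp only [prefix_nil, reduceCtorEq, false_or, nil_append, exists_cons_eq_replicate_iff]
  exact and_congr_right fun _ => (or_iff_right_of_imp fun h => ⟨0, h⟩).symm

end List

section ReplayDFA

variable {Cap : Type*} [DecidableEq Cap] (π : List (Finset Cap))

theorem replayDFA_evalFrom_none (w : List (Finset Cap)) :
    (replayDFA π).evalFrom none w = none := by
  induction w with
  | nil => rfl
  | cons a w ih => rwa [DFA.evalFrom_cons]

theorem replayDFA_evalFrom_none_notMem_accept (w : List (Finset Cap)) :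
    (replayDFA π).evalFrom none w ∉ (replayDFA π).accept := by
  rw [replayDFA_evalFrom_none]
  rintro ⟨_, ⟨⟩⟩

theorem replayDFA_step_castSucc (j : Fin π.length) (a : Finset Cap) :
    (replayDFA π).step (some j.castSucc) a = if a = π[j] then some j.succ else none := by
  simp [replayDFA, replayStep, Fin.succ]

theorem replayDFA_step_last (a : Finset Cap) :
    (replayDFA π).step (some (Fin.last _)) a = if a = ∅ then some (Fin.last _) else none := by
  simp [replayDFA, replayStep]

theorem replayDFA_evalFrom_mem_accept_iff (w : List (Finset Cap)) (i : Fin (π.length + 1)) :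
    (replayDFA π).evalFrom (some i) w ∈ (replayDFA π).accept ↔
      w <+: π.drop i ∨ ∃ m, w = π.drop i ++ List.replicate m ∅ := by
  induction w generalizing i with
  | nil => exact iff_of_true ⟨i, rfl⟩ (Or.inl List.nil_prefix)
  | cons a w ih =>
    rw [DFA.evalFrom_cons]
    induction i using Fin.lastCases with
    | last =>
      rw [replayDFA_step_last, List.drop_of_length_le (by simp),
        List.cons_prefix_or_eq_append_replicate_nil_iff]
      split_ifs with ha
      · simpa [ha] using ih (Fin.last _)
      · exact iff_of_false (replayDFA_evalFrom_none_notMem_accept π w) fun h => ha h.1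
    | cast j =>
      rw [replayDFA_step_castSucc, Fin.val_castSucc, List.drop_eq_getElem_cons j.isLt,
        List.cons_prefix_or_eq_append_replicate_cons_iff]
      split_ifs with ha
      · simpa [ha] using ih j.succ
      · exact iff_of_false (replayDFA_evalFrom_none_notMem_accept π w) fun h => ha h.1

end ReplayDFA

theorem replayDFA_language {Cap : Type*} [DecidableEq Cap] (π : List (Finset Cap))
    (w : List (Finset Cap)) :
    w ∈ (replayDFA π).accepts ↔
      (w <+: π) ∨ ∃ m : ℕ, w = π ++ List.replicate m ∅ :=
  replayDFA_evalFrom_mem_accept_iff π w 0
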